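/- For the 2ODE y'' = -(x²z² - 2xy²z - 2xyz² + y⁴ + 2y³z + 2xyz + xz² - y²z - xz)/(-x(xz - y² - x)) (Table 3, entry 3; z = y'), the rational function σ(x,y,z) = -2y/x satisfies the determining equation D(σ) = σ² + (∂_zφ)·σ - ∂_yφ on the set where x ≠ 0 and xz - y² - x ≠ 0. -/

import Mathlib

noncomputable def pdx (F : ℝ × ℝ × ℝ → ℝ) (p : ℝ × ℝ × ℝ) : ℝ :=
  deriv (fun t => F (t, p.2.1, p.2.2)) p.1

noncomputable def pdy (F : ℝ × ℝ × ℝ → ℝ) (p : ℝ × ℝ × ℝ) : ℝ :=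
  deriv (fun t => F (p.1, t, p.2.2)) p.2.1

noncomputable def pdz (F : ℝ × ℝ × ℝ → ℝ) (p : ℝ × ℝ × ℝ) : ℝ :=
  deriv (fun t => F (p.1, p.2.1, t)) p.2.2

/-- The Cartan vector field `D = ∂ₓ + z ∂_y + φ ∂_z` of `y'' = φ(x,y,y')`. -/
noncomputable def Dtot (φ F : ℝ × ℝ × ℝ → ℝ) (p : ℝ × ℝ × ℝ) : ℝ :=
  pdx F p + p.2.2 * pdy F p + φ p * pdz F p

/-- Evaluation of a polynomial in three variables at a point of ℝ³. -/
noncomputable def mev (P : MvPolynomial (Fin 3) ℝ) (p : ℝ × ℝ × ℝ) : ℝ :=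
  MvPolynomial.eval ![p.1, p.2.1, p.2.2] P

noncomputable def phi19 (p : ℝ × ℝ × ℝ) : ℝ :=
  (p.1 ^ 2 * p.2.2 ^ 2 - 2 * p.1 * p.2.1 ^ 2 * p.2.2 - 2 * p.1 * p.2.1 * p.2.2 ^ 2
      + p.2.1 ^ 4 + 2 * p.2.1 ^ 3 * p.2.2 + 2 * p.1 * p.2.1 * p.2.2
      + p.1 * p.2.2 ^ 2 - p.2.1 ^ 2 * p.2.2 - p.1 * p.2.2)
    / (-(p.1 * (p.1 * p.2.2 - p.2.1 ^ 2 - p.1)))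

noncomputable def sigma19 (p : ℝ × ℝ × ℝ) : ℝ := -2 * p.2.1 / p.1

/-!
Writing `W = xz - y² - x`, partial fractions give `φ = (y² + 2yz - x - xz - z)/x - x/W`.
The pole part contributes `x²/W²` to `∂_zφ` and `-2xy/W²` to `∂_yφ`, and these cancel in
`(∂_zφ)·σ - ∂_yφ` because `σ·∂_zW = ∂_yW`; what is left is a polynomial identity in `y, z` over `x`.
-/

open Topology

lemma phi19_eq_div_sub_div {x y z : ℝ} (hx : x ≠ 0) (hW : x * z - y ^ 2 - x ≠ 0) :
    phi19 (x, y, z) = (y ^ 2 + 2 * z * y - (x + x * z + z)) / x - x / (x * z - y ^ 2 - x) := by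
  rw [phi19]
  field_simp
  ring

lemma hasDerivAt_phi19_y {x y z : ℝ} (hx : x ≠ 0) (hW : x * z - y ^ 2 - x ≠ 0) :
    HasDerivAt (fun t => phi19 (x, t, z))
      ((2 * y + 2 * z) / x - 2 * x * y / (x * z - y ^ 2 - x) ^ 2) y := by
  have hWt : ∀ᶠ t in 𝓝 y, x * z - t ^ 2 - x ≠ 0 :=
    (show Continuous fun t : ℝ => x * z - t ^ 2 - x by fun_prop).continuousAt.eventually_ne hW
  have hP := (((hasDerivAt_pow 2 y).fun_add ((hasDerivAt_id' y).const_mul (2 * z))).sub_const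
    (x + x * z + z)).div_const x
  have hQ := (hasDerivAt_const y x).fun_div
    (((hasDerivAt_pow 2 y).const_sub (x * z)).sub_const x) hW
  refine ((hP.fun_sub hQ).congr_of_eventuallyEq
    (hWt.mono fun t ht => phi19_eq_div_sub_div hx ht)).congr_deriv ?_
  field_simp
  ring

lemma hasDerivAt_phi19_z {x y z : ℝ} (hx : x ≠ 0) (hW : x * z - y ^ 2 - x ≠ 0) :
    HasDerivAt (fun t => phi19 (x, y, t))
      ((2 * y - x - 1) / x + x ^ 2 / (x * z - y ^ 2 - x) ^ 2) z := by
  have hWt : ∀ᶠ t in 𝓝 z, x * t - y ^ 2 - x ≠ 0 :=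
    (show Continuous fun t : ℝ => x * t - y ^ 2 - x by fun_prop).continuousAt.eventually_ne hW
  have hP := (((((hasDerivAt_id' z).const_mul 2).mul_const y).const_add (y ^ 2)).fun_sub
    ((((hasDerivAt_id' z).const_mul x).const_add x).fun_add (hasDerivAt_id' z))).div_const x
  have hQ := (hasDerivAt_const z x).fun_div
    ((((hasDerivAt_id' z).const_mul x).sub_const (y ^ 2)).sub_const x) hW
  refine ((hP.fun_sub hQ).congr_of_eventuallyEq
    (hWt.mono fun t ht => phi19_eq_div_sub_div hx ht)).congr_deriv ?_
  field_simp
  ring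

lemma pdx_sigma19 {x y z : ℝ} (hx : x ≠ 0) : pdx sigma19 (x, y, z) = 2 * y / x ^ 2 := by
  refine (((hasDerivAt_inv hx).const_mul (-2 * y)).deriv).trans ?_
  ring

lemma pdy_sigma19 (x y z : ℝ) : pdy sigma19 (x, y, z) = -2 / x :=
  (((hasDerivAt_id' y).const_mul (-2)).div_const x).deriv.trans (by ring)

lemma pdz_sigma19 (x y z : ℝ) : pdz sigma19 (x, y, z) = 0 :=
  deriv_const z (-2 * y / x)

/-- σ = -2y/x satisfies the determining equation of the Table 3, entry 3 2ODE. -/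
theorem sigma19_determining :
    ∀ p : ℝ × ℝ × ℝ, p.1 ≠ 0 → p.1 * p.2.2 - p.2.1 ^ 2 - p.1 ≠ 0 →
      Dtot phi19 sigma19 p =
        sigma19 p ^ 2 + pdz phi19 p * sigma19 p - pdy phi19 p := by
  rintro ⟨x, y, z⟩ hx hW
  rw [Dtot, pdx_sigma19 hx, pdy_sigma19, pdz_sigma19, pdz, (hasDerivAt_phi19_z hx hW).deriv,
    pdy, (hasDerivAt_phi19_y hx hW).deriv, sigma19]
  field_simp
  ring
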